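/- There exists a proper geodesic metric space X containing a geodesic ray Y such that Y is Morse but not D-contracting for any constant D. Concretely, let X be obtained from a ray Y = [0,∞) by attaching, for each i ∈ ℕ, an arc of length i² to the endpoints of an interval I_i ⊂ Y of length i (with the intervals I_i pairwise disjoint and marching to infinity). Then Y is Morse in X, but for every D > 0 there is a metric ball in X disjoint from Y whose closest-point projection to Y has diameter greater than 2D. -/

import Mathlib

open Metric Set

/-- A `(λ, ε)`-quasi-geodesic defined on the interval `[a,b]`. -/
def IsQuasiGeodesicOn {X : Type*} [MetricSpace X] (lam eps a b : ℝ) (σ : ℝ → X) : Prop :=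
  ∀ s ∈ Set.Icc a b, ∀ t ∈ Set.Icc a b,
    (1 / lam) * |s - t| - eps ≤ dist (σ s) (σ t) ∧ dist (σ s) (σ t) ≤ lam * |s - t| + eps

/-- A geodesic segment from `x` to `y`, parametrized by arclength on `[0, dist x y]`. -/
def IsGeodesicSegment {X : Type*} [MetricSpace X] (γ : ℝ → X) (x y : X) : Prop :=
  γ 0 = x ∧ γ (dist x y) = y ∧
    ∀ s ∈ Set.Icc (0:ℝ) (dist x y), ∀ t ∈ Set.Icc (0:ℝ) (dist x y),
      dist (γ s) (γ t) = |s - t|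

/-- A geodesic metric space: any two points are joined by a geodesic segment. -/
def GeodesicSpace (X : Type*) [MetricSpace X] : Prop :=
  ∀ x y : X, ∃ γ : ℝ → X, IsGeodesicSegment γ x y

/-- A geodesic ray, parametrized by arclength on `[0, ∞)`. -/
def IsGeodesicRay {X : Type*} [MetricSpace X] (γ : ℝ → X) : Prop :=
  ∀ s ∈ Set.Ici (0:ℝ), ∀ t ∈ Set.Ici (0:ℝ), dist (γ s) (γ t) = |s - t|

/-- A set `im` (the image of a geodesic) is `N`-Morse for a Morse gauge `N : ℝ → ℝ → ℝ` if
every `(λ,ε)`-quasi-geodesic (`λ ≥ 1`, `ε ≥ 0`) with endpoints on `im` stays in the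
`N λ ε`-neighborhood of `im`. -/
def IsMorseWith {X : Type*} [MetricSpace X] (N : ℝ → ℝ → ℝ) (im : Set X) : Prop :=
  ∀ lam eps : ℝ, 1 ≤ lam → 0 ≤ eps → ∀ a b : ℝ, a ≤ b → ∀ σ : ℝ → X,
    IsQuasiGeodesicOn lam eps a b σ → σ a ∈ im → σ b ∈ im →
    ∀ t ∈ Set.Icc a b, Metric.infDist (σ t) im ≤ N lam eps

/-- An `N`-Morse geodesic ray. -/
def IsMorseRay {X : Type*} [MetricSpace X] (N : ℝ → ℝ → ℝ) (γ : ℝ → X) : Prop :=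
  IsGeodesicRay γ ∧ IsMorseWith N (γ '' Set.Ici 0)

/-- An `N`-Morse geodesic segment from `x` to `y`. -/
def IsMorseSegment {X : Type*} [MetricSpace X] (N : ℝ → ℝ → ℝ) (γ : ℝ → X) (x y : X) : Prop :=
  IsGeodesicSegment γ x y ∧ IsMorseWith N (γ '' Set.Icc 0 (dist x y))

/-- The set of closest-point projections of `x` to the set `im`. -/
def projSet {X : Type*} [MetricSpace X] (im : Set X) (x : X) : Set X :=
  {p ∈ im | dist x p = Metric.infDist x im}

/-- The content of the example: `X` is a proper geodesic space containing a Morse geodesic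
ray `γ` such that for every `D > 0` there is a metric ball disjoint from `γ` whose
closest-point projection to `γ` has diameter greater than `2D` (so `γ` is not
`D`-contracting for any `D`). -/
def MorseNotContractingSpace (X : Type) [MetricSpace X] : Prop :=
  ProperSpace X ∧ GeodesicSpace X ∧
    ∃ γ : ℝ → X, IsGeodesicRay γ ∧ (∃ N : ℝ → ℝ → ℝ, IsMorseWith N (γ '' Set.Ici 0)) ∧
      ∀ D : ℝ, 0 < D → ∃ (c : X) (r : ℝ), 0 < r ∧
        Metric.ball c r ∩ (γ '' Set.Ici 0) = ∅ ∧
        2 * D < Metric.diam (⋃ y ∈ Metric.ball c r, projSet (γ '' Set.Ici 0) y)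

/-!
The space is the ray `[0, ∞)` with, for every `n`, an arc of length `(n + 1) ^ 2` glued to the
ends of an interval of length `n + 1` on the ray. The midpoint of the `n`-th arc has both ends of
that interval as closest points on the ray, so the projection of a ball centred there and
disjoint from the ray has diameter at least `n + 1`.

A quasi-geodesic with ends on the ray, sampled at mesh `1 / λ`, moves by at most `1 + ε` per step.
Once it is deeper than `1 + ε`, consecutive samples lie in the same arc, so a deep excursion stays
in one arc until it comes back near one of the two feet. If it comes back to the foot it left
from, its two ends are close and the lower quasi-geodesic bound makes the excursion short. If it
crosses to the other foot, it covers the length `(n + 1) ^ 2` of the arc in a number of steps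
that is linear in the distance `n + 1` between the feet, which bounds `n`.
-/

lemma LipschitzWith.dist_le_sub {X : Type*} [MetricSpace X] {γ : ℝ → X}
    (hγ : LipschitzWith 1 γ) {s t : ℝ} (h : s ≤ t) : dist (γ s) (γ t) ≤ t - s := by
  have := hγ.dist_le_mul s t
  rwa [NNReal.coe_one, one_mul, Real.dist_eq, abs_sub_comm, abs_of_nonneg (sub_nonneg.2 h)] at this

section LipschitzJoined

variable {X : Type*} [MetricSpace X] {x y z : X} {L L' : ℝ}

def LipschitzJoined (x y : X) (L : ℝ) : Prop :=
  ∃ γ : ℝ → X, LipschitzWith 1 γ ∧ γ 0 = x ∧ γ L = y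

lemma LipschitzJoined.symm (h : LipschitzJoined x y L) : LipschitzJoined y x L := by
  obtain ⟨γ, hγ, h0, hL⟩ := h
  refine ⟨fun τ ↦ γ (L - τ), LipschitzWith.of_dist_le_mul fun s t ↦ ?_, by simpa,
    by simpa⟩
  refine (hγ.dist_le_mul _ _).trans ?_
  rw [Real.dist_eq, Real.dist_eq, sub_sub_sub_cancel_left, abs_sub_comm]

lemma LipschitzJoined.trans (hxy : LipschitzJoined x y L) (hyz : LipschitzJoined y z L')
    (hL : 0 ≤ L) (hL' : 0 ≤ L') : LipschitzJoined x z (L + L') := by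
  obtain ⟨γ, hγ, hγ0, hγL⟩ := hxy
  obtain ⟨γ', hγ', hγ'0, hγ'L⟩ := hyz
  refine ⟨fun τ ↦ if τ ≤ L then γ τ else γ' (τ - L),
    LipschitzWith.of_dist_le_mul fun s t ↦ ?_, by simp [hL, hγ0], ?_⟩
  · wlog hst : s ≤ t generalizing s t
    · rw [dist_comm, dist_comm s]; exact this t s (le_of_not_ge hst)
    rw [NNReal.coe_one, one_mul, Real.dist_eq, abs_sub_comm, abs_of_nonneg (sub_nonneg.2 hst)]
    by_cases hs : s ≤ L <;> by_cases ht : t ≤ L <;> simp only [hs, ht, if_true, if_false]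
    · exact hγ.dist_le_sub hst
    · calc dist (γ s) (γ' (t - L)) ≤ dist (γ s) (γ L) + dist (γ' 0) (γ' (t - L)) := by
            rw [hγL, ← hγ'0]; exact dist_triangle _ _ _
        _ ≤ (L - s) + (t - L - 0) :=
            add_le_add (hγ.dist_le_sub hs) (hγ'.dist_le_sub (by linarith))
        _ = t - s := by ring
    · exact absurd (hst.trans ht) hs
    · exact (hγ'.dist_le_sub (by linarith)).trans_eq (by ring)
  · rcases hL'.eq_or_lt with rfl | h
    · simp [hγL, ← hγ'0, hγ'L]
    · simp [not_le.2 (lt_add_of_pos_right L h), hγ'L]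

lemma LipschitzJoined.of_lipschitzWith {f : ℝ → X} (hf : LipschitzWith 1 f) (s t : ℝ) :
    LipschitzJoined (f s) (f t) |t - s| := by
  wlog hst : s ≤ t generalizing s t
  · rw [abs_sub_comm]; exact (this t s (le_of_not_ge hst)).symm
  refine ⟨fun τ ↦ f (s + τ), LipschitzWith.of_dist_le_mul fun a b ↦ ?_, by simp, ?_⟩
  · simpa [Real.dist_eq] using hf.dist_le_mul (s + a) (s + b)
  · simp [abs_of_nonneg (sub_nonneg.2 hst)]

lemma LipschitzJoined.exists_isGeodesicSegment (h : LipschitzJoined x y (dist x y)) :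
    ∃ γ, IsGeodesicSegment γ x y := by
  obtain ⟨γ, hγ, h0, h1⟩ := h
  refine ⟨γ, h0, h1, fun s hs t ht ↦ ?_⟩
  wlog hst : s ≤ t generalizing s t
  · rw [dist_comm, abs_sub_comm]; exact this t ht s hs (le_of_not_ge hst)
  rw [abs_sub_comm, abs_of_nonneg (sub_nonneg.2 hst)]
  refine le_antisymm (hγ.dist_le_sub hst) ?_
  have hxs := hγ.dist_le_sub hs.1
  have hty := hγ.dist_le_sub ht.2
  rw [h0] at hxs
  rw [h1] at hty
  linarith [dist_triangle4 x (γ s) (γ t) y]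

end LipschitzJoined

lemma Nat.exists_maximal_block {P : ℕ → Prop} {j k : ℕ} (h0 : P 0) (hk : P k) (hj : ¬ P j)
    (hjk : j ≤ k) :
    ∃ u w, 0 < u ∧ u ≤ j ∧ j ≤ w ∧ w < k ∧ P (u - 1) ∧ P (w + 1) ∧
      ∀ i, u ≤ i → i ≤ w → ¬ P i := by
  classical
  have hex : ∃ i, P (j + i) := ⟨k - j, by rwa [Nat.add_sub_cancel' hjk]⟩
  have hlast : P (Nat.findGreatest P j) := Nat.findGreatest_spec (Nat.zero_le j) h0
  have hlast_lt : Nat.findGreatest P j < j :=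
    (Nat.findGreatest_le j).lt_of_ne fun h ↦ hj (h ▸ hlast)
  have hfirst : P (j + Nat.find hex) := Nat.find_spec hex
  have hfirst_pos : 0 < Nat.find hex := Nat.pos_of_ne_zero fun h ↦ hj (by simpa [h] using hfirst)
  have hfirst_le : Nat.find hex ≤ k - j := Nat.find_min' hex (by rwa [Nat.add_sub_cancel' hjk])
  refine ⟨Nat.findGreatest P j + 1, j + Nat.find hex - 1, by omega, by omega, by omega, by omega,
    by simpa using hlast, ?_, fun i hi hiw ↦ ?_⟩
  · rwa [Nat.sub_add_cancel (by omega)]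
  rcases le_total i j with hij | hji
  · exact Nat.findGreatest_is_greatest (by omega) hij
  · simpa [Nat.add_sub_cancel' hji] using Nat.find_min hex (m := i - j) (by omega)

lemma dist_le_mul_of_dist_succ_le {X : Type*} [MetricSpace X] {f : ℕ → X} {u w : ℕ} {δ : ℝ}
    (huw : u ≤ w) (h : ∀ i, u ≤ i → i < w → dist (f i) (f (i + 1)) ≤ δ) :
    dist (f u) (f w) ≤ ((w : ℝ) - u) * δ := by
  have := dist_le_Ico_sum_of_dist_le huw (d := fun _ ↦ δ) fun {i} hi hiw ↦ h i hi hiw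
  rwa [Finset.sum_const, Nat.card_Ico, nsmul_eq_mul, Nat.cast_sub huw] at this

lemma IsQuasiGeodesicOn.abs_sub_le {X : Type*} [MetricSpace X] {lam eps a b : ℝ} {σ : ℝ → X}
    (hσ : IsQuasiGeodesicOn lam eps a b σ) (hlam : 0 < lam) {s t : ℝ} (hs : s ∈ Icc a b)
    (ht : t ∈ Icc a b) : |s - t| ≤ lam * (dist (σ s) (σ t) + eps) := by
  have := (hσ s hs t ht).1
  rw [one_div, inv_mul_eq_div, sub_le_iff_le_add, div_le_iff₀ hlam] at this
  linarith

noncomputable def mesh (lam a b : ℝ) (j : ℕ) : ℝ := min (a + j / lam) b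

section mesh

variable {lam a b : ℝ}

lemma mesh_zero (hab : a ≤ b) : mesh lam a b 0 = a := by
  simp [mesh, hab]

lemma mesh_ceil (hlam : 0 < lam) : mesh lam a b ⌈lam * (b - a)⌉₊ = b :=
  min_eq_right <| by
    rw [← sub_le_iff_le_add', le_div_iff₀ hlam]; linarith [Nat.le_ceil (lam * (b - a))]

lemma mesh_mem_Icc (hlam : 0 < lam) (hab : a ≤ b) (j : ℕ) : mesh lam a b j ∈ Icc a b :=
  ⟨le_min (by simp only [le_add_iff_nonneg_right]; positivity) hab, min_le_right _ _⟩

lemma mesh_mono (hlam : 0 < lam) : Monotone (mesh lam a b) := fun i j h ↦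
  min_le_min_right _ (by gcongr)

lemma mul_abs_mesh_sub_mesh_succ_le (hlam : 0 < lam) (j : ℕ) :
    lam * |mesh lam a b j - mesh lam a b (j + 1)| ≤ 1 := by
  have := abs_min_sub_min_le_max (a + j / lam) b (a + (j + 1 : ℕ) / lam) b
  rw [sub_self, abs_zero, max_eq_left (abs_nonneg _), add_sub_add_left_eq_sub, ← sub_div,
    abs_div, abs_of_pos hlam, Nat.cast_succ, sub_add_cancel_left, abs_neg, abs_one] at this
  calc lam * _ ≤ lam * (1 / lam) := by gcongr; simpa [mesh] using this
    _ = 1 := by field_simp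

lemma sub_le_mul_mesh_sub_add_one (hlam : 0 < lam) (hab : a ≤ b) {i j : ℕ} (hij : i ≤ j)
    (hjk : j ≤ ⌈lam * (b - a)⌉₊) :
    (j : ℝ) - i ≤ lam * (mesh lam a b j - mesh lam a b i) + 1 := by
  have hi : mesh lam a b i ≤ a + i / lam := min_le_left _ _
  have hi' : lam * (a + i / lam) = lam * a + i := by field_simp
  rcases le_total (a + j / lam) b with hj | hj
  · have hj' : lam * (a + j / lam) = lam * a + j := by field_simp
    have hij' : a + i / lam ≤ a + j / lam := by gcongr
    rw [mesh, min_eq_left hj, mesh, min_eq_left (hij'.trans hj)]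
    linarith
  · have hk : (⌈lam * (b - a)⌉₊ : ℝ) < lam * (b - a) + 1 :=
      Nat.ceil_lt_add_one (by nlinarith)
    have hjk' : (j : ℝ) ≤ ⌈lam * (b - a)⌉₊ := by exact_mod_cast hjk
    rw [mesh, min_eq_right hj]
    nlinarith

lemma exists_mul_abs_sub_mesh_le (hlam : 0 < lam) {t : ℝ} (ht : t ∈ Icc a b) :
    ∃ j ≤ ⌈lam * (b - a)⌉₊, lam * |t - mesh lam a b j| ≤ 1 := by
  set j := ⌊lam * (t - a)⌋₊
  have h1 : (j : ℝ) ≤ lam * (t - a) := Nat.floor_le (by nlinarith [ht.1])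
  have h2 : lam * (t - a) < j + 1 := Nat.lt_floor_add_one _
  have hj : lam * (a + j / lam) = lam * a + j := by field_simp
  have hle : mesh lam a b j ≤ t := (min_le_left _ _).trans (by nlinarith)
  refine ⟨j, (Nat.floor_le_floor (by nlinarith [ht.2])).trans (Nat.floor_le_ceil _), ?_⟩
  rw [abs_of_nonneg (sub_nonneg.2 hle), mesh]
  rcases le_total (a + j / lam) b with hb | hb
  · rw [min_eq_left hb]; linarith
  · rw [min_eq_right hb]; nlinarith [ht.2]

end mesh

def IsDiscreteQuasiGeodesic {X : Type*} [MetricSpace X] (x : ℕ → X) (k : ℕ) (δ A B : ℝ) :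
    Prop :=
  (∀ j < k, dist (x j) (x (j + 1)) ≤ δ) ∧
    ∀ i j, i ≤ j → j ≤ k → (j : ℝ) - i ≤ A * dist (x i) (x j) + B

lemma IsQuasiGeodesicOn.isDiscreteQuasiGeodesic_mesh {X : Type*} [MetricSpace X]
    {lam eps a b : ℝ} {σ : ℝ → X} (hσ : IsQuasiGeodesicOn lam eps a b σ) (hlam : 0 < lam)
    (hab : a ≤ b) :
    IsDiscreteQuasiGeodesic (σ ∘ mesh lam a b) ⌈lam * (b - a)⌉₊ (1 + eps) (lam ^ 2)
      (lam ^ 2 * eps + 1) := by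
  have hmem := mesh_mem_Icc hlam hab
  refine ⟨fun j _ ↦ ?_, fun i j hij hjk ↦ ?_⟩
  · exact (hσ _ (hmem j) _ (hmem (j + 1))).2.trans
      (by linarith [mul_abs_mesh_sub_mesh_succ_le hlam (a := a) (b := b) j])
  · have := mul_le_mul_of_nonneg_left (hσ.abs_sub_le hlam (hmem j) (hmem i)) hlam.le
    rw [abs_of_nonneg (sub_nonneg.2 (mesh_mono hlam hij)), dist_comm] at this
    simp only [Function.comp]
    nlinarith [sub_le_mul_mesh_sub_add_one hlam hab hij hjk]

lemma abs_sub_le_or_le_abs_sub {L c c' r : ℝ} (hc : c ∈ Icc 0 L) (hc' : c' ∈ Icc 0 L)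
    (h : min c (L - c) ≤ r) (h' : min c' (L - c') ≤ r) :
    |c - c'| ≤ r ∨ L - 2 * r ≤ |c - c'| := by
  obtain ⟨hc0, hcL⟩ := hc
  obtain ⟨hc0', hcL'⟩ := hc'
  rcases min_le_iff.1 h with h | h <;> rcases min_le_iff.1 h' with h' | h'
  · exact Or.inl (abs_le.2 ⟨by linarith, by linarith⟩)
  · exact Or.inr ((by linarith : L - 2 * r ≤ c' - c).trans (neg_le_abs _ |>.trans_eq' (by ring)))
  · exact Or.inr ((by linarith : L - 2 * r ≤ c - c').trans (le_abs_self _))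
  · exact Or.inl (abs_le.2 ⟨by linarith, by linarith⟩)

lemma isBounded_biUnion_projSet {X : Type*} [MetricSpace X] (S : Set X) (c : X) (r : ℝ) :
    Bornology.IsBounded (⋃ y ∈ ball c r, projSet S y) := by
  refine (isBounded_closedBall (x := c) (r := infDist c S + 2 * r)).subset ?_
  simp only [iUnion_subset_iff]
  intro y hy p hp
  rw [mem_ball] at hy
  rw [mem_closedBall]
  calc dist p c ≤ dist y p + dist y c := dist_triangle_left p c y
    _ = infDist y S + dist y c := by rw [hp.2]
    _ ≤ infDist c S + 2 * r := by
      linarith [infDist_le_infDist_add_dist (s := S) (x := y) (y := c)]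

namespace RayWithArcs

noncomputable section

def span (n : ℕ) : ℝ := n + 1

def arcLength (n : ℕ) : ℝ := span n ^ 2

def leftFoot (n : ℕ) : ℝ := ((n : ℝ) + 1) ^ 2

def rightFoot (n : ℕ) : ℝ := leftFoot n + span n

lemma one_le_span (n : ℕ) : 1 ≤ span n := by
  simp [span]

lemma span_le_arcLength (n : ℕ) : span n ≤ arcLength n := by
  have := one_le_span n
  rw [arcLength]; nlinarith

lemma arcLength_pos (n : ℕ) : 0 < arcLength n := by
  linarith [one_le_span n, span_le_arcLength n]

lemma le_leftFoot (n : ℕ) : (n : ℝ) ≤ leftFoot n := by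
  rw [leftFoot]; nlinarith

lemma leftFoot_nonneg (n : ℕ) : 0 ≤ leftFoot n := by
  rw [leftFoot]; positivity

lemma rightFoot_nonneg (n : ℕ) : 0 ≤ rightFoot n := by
  rw [rightFoot]; linarith [leftFoot_nonneg n, one_le_span n]

lemma abs_leftFoot_sub_rightFoot (n : ℕ) : |leftFoot n - rightFoot n| = span n := by
  rw [rightFoot, sub_add_cancel_left, abs_neg, abs_of_pos (by linarith [one_le_span n])]

/-- `arc n s` is the point of the `n`-th arc at arclength `s` from its left foot; `Valid` singles
out the actual points of the space. -/
inductive Pt : Type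
  | ray (t : ℝ)
  | arc (n : ℕ) (s : ℝ)

namespace Pt

def Valid : Pt → Prop
  | ray t => 0 ≤ t
  | arc n s => 0 < s ∧ s < arcLength n

/-- A point reaches the ray at `gate a` after travelling `gateCost a` inside its arc, and
`rayDist` is the length of a shortest path through the ray. -/
def gate : Bool → Pt → ℝ
  | _, ray t => t
  | false, arc n _ => leftFoot n
  | true, arc n _ => rightFoot n

def gateCost : Bool → Pt → ℝ
  | _, ray _ => 0
  | false, arc _ s => s
  | true, arc n s => arcLength n - s

@[simp] lemma gate_ray (a : Bool) (t : ℝ) : (ray t).gate a = t := by cases a <;> rfl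

@[simp] lemma gateCost_ray (a : Bool) (t : ℝ) : (ray t).gateCost a = 0 := by cases a <;> rfl

def routeLength (a b : Bool) (x y : Pt) : ℝ :=
  x.gateCost a + |x.gate a - y.gate b| + y.gateCost b

def rayDist (x y : Pt) : ℝ := ⨅ g : Bool × Bool, routeLength g.1 g.2 x y

def depth (x : Pt) : ℝ := min (x.gateCost false) (x.gateCost true)

def index : Pt → ℕ
  | ray _ => 0
  | arc n _ => n

def coord : Pt → ℝ
  | ray t => t
  | arc _ s => s

/-- Two points of the same arc may also be joined inside the arc. -/
def dist : Pt → Pt → ℝ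
  | arc n s, arc m t =>
      if n = m then min |s - t| (rayDist (arc n s) (arc m t)) else rayDist (arc n s) (arc m t)
  | x, y => rayDist x y

variable {x y z : Pt}

lemma rayDist_le (a b : Bool) (x y : Pt) : rayDist x y ≤ routeLength a b x y :=
  ciInf_le (Finite.bddBelow_range _) (a, b)

lemma exists_rayDist_eq (x y : Pt) : ∃ a b, rayDist x y = routeLength a b x y := by
  obtain ⟨⟨a, b⟩, h⟩ :=
    exists_eq_ciInf_of_finite (f := fun g : Bool × Bool ↦ routeLength g.1 g.2 x y)
  exact ⟨a, b, h.symm⟩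

lemma routeLength_comm (a b : Bool) (x y : Pt) : routeLength a b x y = routeLength b a y x := by
  rw [routeLength, routeLength, abs_sub_comm]; ring

lemma rayDist_comm (x y : Pt) : rayDist x y = rayDist y x := by
  have key : ∀ x y, rayDist x y ≤ rayDist y x := fun x y ↦ by
    obtain ⟨a, b, h⟩ := exists_rayDist_eq y x
    rw [h, routeLength_comm]
    exact rayDist_le b a x y
  exact (key x y).antisymm (key y x)

lemma gateCost_nonneg (hx : x.Valid) (a : Bool) : 0 ≤ x.gateCost a := by
  cases x with
  | ray t => cases a <;> simp [gateCost]
  | arc n s => cases a <;> simp only [gateCost] <;> linarith [hx.1, hx.2]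

lemma gate_nonneg (hx : x.Valid) (a : Bool) : 0 ≤ x.gate a := by
  cases x with
  | ray t => exact hx
  | arc n s => cases a; exacts [leftFoot_nonneg n, rightFoot_nonneg n]

lemma abs_gate_sub_gate_le (hx : x.Valid) (a b : Bool) :
    |x.gate a - x.gate b| ≤ x.gateCost a + x.gateCost b := by
  cases x with
  | ray t => cases a <;> cases b <;> simp [gate, gateCost]
  | arc n s =>
    have := span_le_arcLength n
    have := abs_leftFoot_sub_rightFoot n
    have := abs_sub_comm (leftFoot n) (rightFoot n)
    cases a <;> cases b <;> simp only [gate, gateCost, sub_self, abs_zero] <;>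
      linarith [hx.1, hx.2]

lemma rayDist_triangle (hy : y.Valid) : rayDist x z ≤ rayDist x y + rayDist y z := by
  obtain ⟨a, b, hxy⟩ := exists_rayDist_eq x y
  obtain ⟨b', c, hyz⟩ := exists_rayDist_eq y z
  rw [hxy, hyz]
  refine (rayDist_le a c x z).trans ?_
  have := abs_gate_sub_gate_le hy b b'
  have := abs_sub_le (x.gate a) (y.gate b) (z.gate c)
  have := abs_sub_le (y.gate b) (y.gate b') (z.gate c)
  simp only [routeLength]
  linarith

lemma rayDist_arc_le (n : ℕ) (s t : ℝ) (z : Pt) :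
    rayDist (arc n s) z ≤ |s - t| + rayDist (arc n t) z := by
  obtain ⟨a, b, h⟩ := exists_rayDist_eq (arc n t) z
  rw [h]
  refine (rayDist_le a b _ z).trans ?_
  have := le_abs_self (s - t)
  have := neg_abs_le (s - t)
  cases a <;> simp only [routeLength, gate, gateCost] <;> linarith

lemma depth_le_gateCost (x : Pt) (a : Bool) : x.depth ≤ x.gateCost a := by
  cases a
  exacts [min_le_left _ _, min_le_right _ _]

lemma depth_add_depth_le_rayDist (x y : Pt) :
    x.depth + y.depth ≤ rayDist x y := by
  obtain ⟨a, b, h⟩ := exists_rayDist_eq x y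
  rw [h, routeLength]
  linarith [depth_le_gateCost x a, depth_le_gateCost y b, abs_nonneg (x.gate a - y.gate b)]

lemma depth_nonneg (hx : x.Valid) : 0 ≤ x.depth :=
  le_min (gateCost_nonneg hx _) (gateCost_nonneg hx _)

lemma rayDist_ray_ray (u v : ℝ) : rayDist (ray u) (ray v) = |u - v| := by
  obtain ⟨a, b, h⟩ := exists_rayDist_eq (ray u) (ray v)
  refine le_antisymm ?_ ?_
  · simpa [routeLength, gate, gateCost] using rayDist_le false false (ray u) (ray v)
  · rw [h]; cases a <;> cases b <;> simp [routeLength, gate, gateCost]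

lemma dist_le_rayDist (x y : Pt) : x.dist y ≤ rayDist x y := by
  cases x <;> cases y <;> try exact le_rfl
  simp only [dist]; split_ifs
  exacts [min_le_right _ _, le_rfl]

lemma dist_arc_arc_le (n : ℕ) (s t : ℝ) : (arc n s).dist (arc n t) ≤ |s - t| := by
  simp only [dist, if_true]; exact min_le_left _ _

lemma dist_eq_rayDist_or (x y : Pt) : x.dist y = rayDist x y ∨
    ∃ n s t, x = arc n s ∧ y = arc n t ∧ x.dist y = |s - t| := by
  cases x with
  | ray u => exact Or.inl rfl
  | arc n s =>
    cases y with
    | ray v => exact Or.inl rfl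
    | arc m t =>
      simp only [dist]
      split_ifs with hnm
      · subst hnm
        rcases min_choice |s - t| (rayDist (arc n s) (arc n t)) with h | h
        · exact Or.inr ⟨n, s, t, rfl, rfl, h⟩
        · exact Or.inl h
      · exact Or.inl rfl

lemma dist_comm (x y : Pt) : x.dist y = y.dist x := by
  cases x <;> cases y <;> simp only [dist, rayDist_comm, abs_sub_comm, eq_comm]

lemma dist_triangle (hy : y.Valid) : x.dist z ≤ x.dist y + y.dist z := by
  rcases dist_eq_rayDist_or y z with hyz | ⟨m, t, r, rfl, rfl, hyz⟩
  · rcases dist_eq_rayDist_or x y with hxy | ⟨n, s, t, rfl, rfl, hxy⟩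
    · rw [hxy, hyz]; exact (dist_le_rayDist x z).trans (rayDist_triangle hy)
    · rw [hxy, hyz]; exact (dist_le_rayDist _ z).trans (rayDist_arc_le n s t z)
  · rcases dist_eq_rayDist_or x (arc m t) with hxy | ⟨n, s, t', rfl, hy', hxy⟩
    · rw [hxy, hyz, rayDist_comm x, abs_sub_comm, add_comm]
      exact (dist_le_rayDist x _).trans ((rayDist_comm _ _).trans_le (rayDist_arc_le m r t x))
    · obtain ⟨rfl, rfl⟩ := arc.inj hy'
      rw [hxy, hyz]; exact (dist_arc_arc_le _ s r).trans (abs_sub_le s _ r)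

lemma depth_pos_of_arc {n : ℕ} {s : ℝ} (h : (arc n s).Valid) : 0 < (arc n s).depth :=
  lt_min h.1 (sub_pos.2 h.2)

lemma dist_self (hx : x.Valid) : x.dist x = 0 := by
  cases x with
  | ray u => simp [dist, rayDist_ray_ray]
  | arc n s =>
    simp only [dist, if_true, sub_self, abs_zero]
    exact min_eq_left ((add_nonneg (depth_nonneg hx) (depth_nonneg hx)).trans
      (depth_add_depth_le_rayDist _ _))

lemma eq_of_dist_eq_zero (hx : x.Valid) (hy : y.Valid) (h : x.dist y = 0) : x = y := by
  rcases dist_eq_rayDist_or x y with hxy | ⟨n, s, t, rfl, rfl, hxy⟩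
  · have hdepth := depth_add_depth_le_rayDist x y
    cases x with
    | arc n s => linarith [depth_pos_of_arc hx, depth_nonneg hy]
    | ray u =>
      cases y with
      | arc m t => linarith [depth_pos_of_arc hy, depth_nonneg hx]
      | ray v => rw [hxy, rayDist_ray_ray, abs_eq_zero, sub_eq_zero] at h; rw [h]
  · rw [hxy, abs_eq_zero, sub_eq_zero] at h; rw [h]

end Pt

def _root_.RayWithArcs : Type := {x : Pt // x.Valid}

instance : MetricSpace RayWithArcs where
  dist x y := x.1.dist y.1
  dist_self x := Pt.dist_self x.2
  dist_comm x y := Pt.dist_comm x.1 y.1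
  dist_triangle x y z := Pt.dist_triangle y.2
  eq_of_dist_eq_zero h := Subtype.ext (Pt.eq_of_dist_eq_zero (Subtype.prop _) (Subtype.prop _) h)

open Pt hiding dist dist_self dist_comm dist_triangle eq_of_dist_eq_zero

lemma dist_def (x y : RayWithArcs) : dist x y = x.1.dist y.1 := rfl

lemma dist_le_routeLength (x y : RayWithArcs) (a b : Bool) :
    dist x y ≤ routeLength a b x.1 y.1 :=
  (Pt.dist_le_rayDist _ _).trans (rayDist_le a b _ _)

/-! ### Geodesics and properness -/

def rayPt (t : ℝ) : RayWithArcs := ⟨ray (max t 0), le_max_right t 0⟩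

lemma rayPt_val {t : ℝ} (ht : 0 ≤ t) : (rayPt t).1 = ray t := by
  simp [rayPt, ht]

lemma dist_rayPt_rayPt {s t : ℝ} (hs : 0 ≤ s) (ht : 0 ≤ t) :
    dist (rayPt s) (rayPt t) = |s - t| := by
  rw [dist_def, rayPt_val hs, rayPt_val ht]
  exact rayDist_ray_ray s t

lemma lipschitzWith_rayPt : LipschitzWith 1 rayPt :=
  LipschitzWith.of_dist_le_mul fun s t ↦ by
    rw [NNReal.coe_one, one_mul, Real.dist_eq, dist_def]
    exact (rayDist_ray_ray _ _).trans_le (abs_max_sub_max_le_abs s t 0)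

lemma eq_rayPt {x : RayWithArcs} {t : ℝ} (hx : x.1 = ray t) : x = rayPt t := by
  have ht : (ray t).Valid := hx ▸ x.2
  exact Subtype.ext (by rw [hx, rayPt_val ht])

def arcPt (n : ℕ) (s : ℝ) : RayWithArcs :=
  if h : 0 < s ∧ s < arcLength n then ⟨arc n s, h⟩
  else if s ≤ 0 then rayPt (leftFoot n) else rayPt (rightFoot n)

variable {n : ℕ} {s t : ℝ}

lemma arcPt_val (h : 0 < s) (h' : s < arcLength n) : (arcPt n s).1 = arc n s := by
  simp [arcPt, h, h']

lemma eq_arcPt {x : RayWithArcs} (hx : x.1 = arc n s) : x = arcPt n s := by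
  have hs : (arc n s).Valid := hx ▸ x.2
  exact Subtype.ext (by rw [hx, arcPt_val hs.1 hs.2])

lemma arcPt_of_nonpos (h : s ≤ 0) : arcPt n s = rayPt (leftFoot n) := by
  simp [arcPt, h, not_lt.2 h]

lemma arcPt_of_arcLength_le (h : arcLength n ≤ s) : arcPt n s = rayPt (rightFoot n) := by
  have hs : 0 < s := (arcLength_pos n).trans_le h
  simp [arcPt, not_lt.2 h, not_le.2 hs]

lemma lipschitzWith_arcPt (n : ℕ) : LipschitzWith 1 (arcPt n) := by
  refine LipschitzWith.of_dist_le_mul fun s t ↦ ?_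
  rw [NNReal.coe_one, one_mul, Real.dist_eq]
  wlog hst : s ≤ t generalizing s t
  · rw [dist_comm, abs_sub_comm]; exact this t s (le_of_not_ge hst)
  rw [abs_sub_comm, abs_of_nonneg (sub_nonneg.2 hst)]
  have := span_le_arcLength n
  rcases le_or_gt s 0 with hs | hs <;> rcases le_or_gt (arcLength n) t with ht | ht
  · rw [arcPt_of_nonpos hs, arcPt_of_arcLength_le ht,
      dist_rayPt_rayPt (leftFoot_nonneg n) (rightFoot_nonneg n), abs_leftFoot_sub_rightFoot]
    linarith
  · rw [arcPt_of_nonpos hs]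
    rcases le_or_gt t 0 with ht0 | ht0
    · rw [arcPt_of_nonpos ht0, dist_self]; linarith
    · refine (dist_le_routeLength _ _ false false).trans ?_
      simp [rayPt_val (leftFoot_nonneg n), arcPt_val ht0 ht, routeLength, gate, gateCost]
      linarith
  · rw [arcPt_of_arcLength_le ht]
    rcases le_or_gt (arcLength n) s with hs' | hs'
    · rw [arcPt_of_arcLength_le hs', dist_self]; linarith
    · refine (dist_le_routeLength _ _ true true).trans ?_
      simp [rayPt_val (rightFoot_nonneg n), arcPt_val hs hs', routeLength, gate, gateCost]
      linarith
  · rw [dist_def, arcPt_val hs (hst.trans_lt ht), arcPt_val (hs.trans_le hst) ht]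
    exact (Pt.dist_arc_arc_le n s t).trans_eq
      (by rw [abs_sub_comm, abs_of_nonneg (sub_nonneg.2 hst)])

lemma lipschitzJoined_gate (x : RayWithArcs) (a : Bool) :
    LipschitzJoined x (rayPt (x.1.gate a)) (x.1.gateCost a) := by
  obtain ⟨x, hx⟩ := x
  cases x with
  | ray u =>
    have : rayPt u = ⟨ray u, hx⟩ := Subtype.ext (rayPt_val hx)
    cases a <;> simpa [gate, gateCost, this] using
      LipschitzJoined.of_lipschitzWith lipschitzWith_rayPt u u
  | arc n s =>
    have hx' : (⟨arc n s, hx⟩ : RayWithArcs) = arcPt n s := eq_arcPt rfl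
    cases a
    · have := LipschitzJoined.of_lipschitzWith (lipschitzWith_arcPt n) s 0
      rwa [← hx', arcPt_of_nonpos le_rfl, zero_sub, abs_neg, abs_of_pos hx.1] at this
    · have := LipschitzJoined.of_lipschitzWith (lipschitzWith_arcPt n) s (arcLength n)
      rwa [← hx', arcPt_of_arcLength_le le_rfl, abs_of_pos (sub_pos.2 hx.2)] at this

lemma lipschitzJoined_routeLength (x y : RayWithArcs) (a b : Bool) :
    LipschitzJoined x y (routeLength a b x.1 y.1) := by
  have hray := LipschitzJoined.of_lipschitzWith lipschitzWith_rayPt (x.1.gate a) (y.1.gate b)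
  rw [abs_sub_comm] at hray
  exact ((lipschitzJoined_gate x a).trans hray (gateCost_nonneg x.2 a) (abs_nonneg _)).trans
    (lipschitzJoined_gate y b).symm (add_nonneg (gateCost_nonneg x.2 a) (abs_nonneg _))
    (gateCost_nonneg y.2 b)

theorem geodesicSpace : GeodesicSpace RayWithArcs := by
  intro x y
  apply LipschitzJoined.exists_isGeodesicSegment
  rcases Pt.dist_eq_rayDist_or x.1 y.1 with h | ⟨n, s, t, hx, hy, h⟩
  · obtain ⟨a, b, hab⟩ := exists_rayDist_eq x.1 y.1
    rw [dist_def, h, hab]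
    exact lipschitzJoined_routeLength x y a b
  · rw [dist_def, h, abs_sub_comm, eq_arcPt hx, eq_arcPt hy]
    exact LipschitzJoined.of_lipschitzWith (lipschitzWith_arcPt n) s t

lemma leftFoot_le_dist_rayPt_zero {x : RayWithArcs} (hx : x.1 = arc n s) :
    leftFoot n ≤ dist (rayPt 0) x := by
  have hs : (arc n s).Valid := hx ▸ x.2
  obtain ⟨a, b, h⟩ := exists_rayDist_eq (ray 0) (arc n s)
  have hfeet : leftFoot n ≤ rightFoot n := by rw [rightFoot]; linarith [one_le_span n]
  rw [dist_def, rayPt_val le_rfl, hx]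
  change leftFoot n ≤ rayDist _ _
  rw [h]
  cases a <;> cases b <;> simp only [routeLength, gate, gateCost, zero_sub, abs_neg, zero_add,
    abs_of_nonneg (leftFoot_nonneg n), abs_of_nonneg (rightFoot_nonneg n)] <;> linarith [hs.1, hs.2]

lemma closedBall_rayPt_zero_subset (R : ℝ) :
    closedBall (rayPt 0) R ⊆
      rayPt '' Icc 0 R ∪
        ⋃ n ∈ Finset.range (⌊R⌋₊ + 1), arcPt n '' Icc 0 (arcLength n) := by
  intro x hR
  rw [mem_closedBall, _root_.dist_comm] at hR
  rcases hx : x.1 with u | ⟨n, s⟩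
  · have hu : (ray u).Valid := hx ▸ x.2
    rw [eq_rayPt hx, dist_rayPt_rayPt le_rfl hu, zero_sub, abs_neg, abs_of_nonneg hu] at hR
    exact Or.inl ⟨u, ⟨hu, hR⟩, (eq_rayPt hx).symm⟩
  · have hs : (arc n s).Valid := hx ▸ x.2
    have hn := (le_leftFoot n).trans ((leftFoot_le_dist_rayPt_zero hx).trans hR)
    refine Or.inr (mem_biUnion (Finset.mem_range.2 (Nat.lt_succ_of_le (Nat.le_floor hn))) ?_)
    exact ⟨s, ⟨hs.1.le, hs.2.le⟩, (eq_arcPt hx).symm⟩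

instance : ProperSpace RayWithArcs := by
  refine ProperSpace.of_seq_closedBall (x := rayPt 0) tendsto_natCast_atTop_atTop
    (Filter.Eventually.of_forall fun R : ℕ ↦ ?_)
  refine IsCompact.of_isClosed_subset ?_ isClosed_closedBall (closedBall_rayPt_zero_subset R)
  exact (isCompact_Icc.image lipschitzWith_rayPt.continuous).union
    ((Finset.range _).isCompact_biUnion fun n _ ↦
      isCompact_Icc.image (lipschitzWith_arcPt n).continuous)

/-! ### Distance and projection to the ray -/

def depth (x : RayWithArcs) : ℝ := x.1.depth

lemma depth_rayPt (t : ℝ) : depth (rayPt t) = 0 := by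
  simp [depth, rayPt, Pt.depth, gateCost]

lemma depth_le_depth_add_dist (x y : RayWithArcs) : depth x ≤ depth y + dist x y := by
  rcases Pt.dist_eq_rayDist_or x.1 y.1 with h | ⟨n, s, t, hx, hy, h⟩
  · rw [depth, depth, dist_def, h]
    linarith [Pt.depth_add_depth_le_rayDist x.1 y.1, Pt.depth_nonneg y.2]
  · rw [depth, depth, dist_def, h, hx, hy, ← sub_le_iff_le_add]
    simp only [Pt.depth, gateCost]
    have := le_abs_self (s - t)
    have := neg_abs_le (s - t)
    exact le_min (by linarith [min_le_left s (arcLength n - s)])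
      (by linarith [min_le_right s (arcLength n - s)])

lemma dist_rayPt_gate_le (x : RayWithArcs) (a : Bool) :
    dist x (rayPt (x.1.gate a)) ≤ x.1.gateCost a := by
  refine (dist_le_routeLength _ _ a a).trans_eq ?_
  rw [rayPt_val (gate_nonneg x.2 a)]
  simp [routeLength]

lemma infDist_eq_depth (x : RayWithArcs) : infDist x (rayPt '' Ici 0) = depth x := by
  refine le_antisymm (le_min ?_ ?_)
    ((le_infDist ⟨_, mem_image_of_mem _ (mem_Ici.2 le_rfl)⟩).2 ?_)
  all_goals try
    exact (infDist_le_dist_of_mem (mem_image_of_mem _ (gate_nonneg x.2 _))).trans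
      (dist_rayPt_gate_le x _)
  rintro _ ⟨u, -, rfl⟩
  simpa [depth_rayPt] using depth_le_depth_add_dist x (rayPt u)

lemma isGeodesicRay_rayPt : IsGeodesicRay rayPt := fun _ hs _ ht ↦ dist_rayPt_rayPt hs ht

lemma ball_depth_inter_eq_empty (x : RayWithArcs) : ball x (depth x) ∩ rayPt '' Ici 0 = ∅ := by
  refine eq_empty_iff_forall_notMem.2 fun y ⟨hy, u, _, hu⟩ ↦ ?_
  subst hu
  have := depth_le_depth_add_dist x (rayPt u)
  rw [depth_rayPt, zero_add] at this
  exact (mem_ball'.1 hy).not_ge this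

lemma rayPt_gate_mem_projSet (x : RayWithArcs) {a : Bool} (h : x.1.gateCost a = depth x) :
    rayPt (x.1.gate a) ∈ projSet (rayPt '' Ici 0) x := by
  refine ⟨mem_image_of_mem _ (gate_nonneg x.2 a), ?_⟩
  rw [infDist_eq_depth]
  refine le_antisymm ((dist_rayPt_gate_le x a).trans h.le) ?_
  simpa [depth_rayPt] using depth_le_depth_add_dist x (rayPt (x.1.gate a))

theorem exists_ball_diam_projSet_gt (D : ℝ) : ∃ (c : RayWithArcs) (r : ℝ), 0 < r ∧
    ball c r ∩ rayPt '' Ici 0 = ∅ ∧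
      2 * D < diam (⋃ y ∈ ball c r, projSet (rayPt '' Ici 0) y) := by
  set n := ⌈2 * D⌉₊
  have hL := arcLength_pos n
  set c := arcPt n (arcLength n / 2)
  have hc : c.1 = arc n (arcLength n / 2) := arcPt_val (half_pos hL) (half_lt_self hL)
  have hcost : ∀ a, c.1.gateCost a = depth c := by
    intro a
    rw [depth, hc]
    cases a <;> simp only [Pt.depth, gateCost, sub_half, min_self]
  have hr : 0 < depth c := by
    rw [depth, hc]; exact Pt.depth_pos_of_arc ⟨half_pos hL, half_lt_self hL⟩
  refine ⟨c, depth c, hr, ball_depth_inter_eq_empty c, ?_⟩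
  have hp := mem_biUnion (mem_ball_self hr) (rayPt_gate_mem_projSet c (hcost false))
  have hq := mem_biUnion (mem_ball_self hr) (rayPt_gate_mem_projSet c (hcost true))
  rw [hc] at hp hq
  calc 2 * D < span n := by rw [span]; linarith [Nat.le_ceil (2 * D)]
    _ = dist (rayPt (leftFoot n)) (rayPt (rightFoot n)) := by
      rw [dist_rayPt_rayPt (leftFoot_nonneg n) (rightFoot_nonneg n), abs_leftFoot_sub_rightFoot]
    _ ≤ _ := dist_le_diam_of_mem (isBounded_biUnion_projSet _ _ _) hp hq

/-! ### Quasi-geodesics stay near the ray -/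

lemma eq_arc_of_depth_pos {x : RayWithArcs} (h : 0 < depth x) :
    x.1 = arc x.1.index x.1.coord := by
  rcases hx : x.1 with u | ⟨n, s⟩
  · rw [depth, hx] at h; simp [Pt.depth] at h
  · rfl

lemma index_eq_and_dist_eq_of_dist_lt {x y : RayWithArcs} (h : dist x y < depth x + depth y) :
    x.1.index = y.1.index ∧ dist x y = |x.1.coord - y.1.coord| := by
  rcases Pt.dist_eq_rayDist_or x.1 y.1 with hd | ⟨n, s, t, hx, hy, hd⟩
  · rw [dist_def, hd] at h
    exact absurd (Pt.depth_add_depth_le_rayDist x.1 y.1) h.not_ge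
  · rw [dist_def, hd, hx, hy]
    exact ⟨rfl, rfl⟩

lemma dist_le_depth_add_span_add_depth {x y : RayWithArcs} {n : ℕ} {s t : ℝ}
    (hx : x.1 = arc n s) (hy : y.1 = arc n t) : dist x y ≤ depth x + span n + depth y := by
  obtain ⟨a, ha⟩ : ∃ a, depth x = x.1.gateCost a :=
    (min_choice _ _).elim (fun h ↦ ⟨false, h⟩) (fun h ↦ ⟨true, h⟩)
  obtain ⟨b, hb⟩ : ∃ b, depth y = y.1.gateCost b :=
    (min_choice _ _).elim (fun h ↦ ⟨false, h⟩) (fun h ↦ ⟨true, h⟩)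
  have hfeet : |x.1.gate a - y.1.gate b| ≤ span n := by
    have := abs_leftFoot_sub_rightFoot n
    have := abs_sub_comm (leftFoot n) (rightFoot n)
    rw [hx, hy]
    cases a <;> cases b <;> simp only [gate, sub_self, abs_zero] <;> linarith [one_le_span n]
  refine (dist_le_routeLength x y a b).trans ?_
  rw [routeLength, ← ha, ← hb]
  linarith

lemma index_eq_and_abs_coord_sub_le {x : ℕ → RayWithArcs} {u w : ℕ} {δ : ℝ} (huw : u ≤ w)
    (hdeep : ∀ i, u ≤ i → i ≤ w → δ < depth (x i))
    (hstep : ∀ i, u ≤ i → i < w → dist (x i) (x (i + 1)) ≤ δ) :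
    (x w).1.index = (x u).1.index ∧ |(x u).1.coord - (x w).1.coord| ≤ ((w : ℝ) - u) * δ := by
  have hpair : ∀ i, u ≤ i → i < w →
      (x i).1.index = (x (i + 1)).1.index ∧
        dist (x i) (x (i + 1)) = |(x i).1.coord - (x (i + 1)).1.coord| :=
    fun i hi hiw ↦ index_eq_and_dist_eq_of_dist_lt (by
      linarith [hdeep i hi hiw.le, hdeep (i + 1) (by omega) hiw, hstep i hi hiw,
        dist_nonneg (x := x i) (y := x (i + 1))])
  refine ⟨?_, ?_⟩
  · have : ∀ i, u ≤ i → i ≤ w → (x i).1.index = (x u).1.index := by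
      intro i hi
      induction i, hi using Nat.le_induction with
      | base => exact fun _ ↦ rfl
      | succ i hi ih => exact fun hiw ↦ ((hpair i hi hiw).1.symm.trans (ih (by omega)))
    exact this w huw le_rfl
  · have := dist_le_mul_of_dist_succ_le (f := fun i ↦ (x i).1.coord) huw fun i hi hiw ↦ by
      rw [Real.dist_eq, ← (hpair i hi hiw).2]; exact hstep i hi hiw
    rwa [Real.dist_eq] at this

/-- `2 * r + span n` bounds the distance between the ends of an excursion into the `n`-th arc,
and `4 * r + δ * (2 * A * r + B) + A * δ` bounds it when the excursion crosses the arc. -/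
def excursionLength (r δ A B : ℝ) : ℝ := A * (4 * r + δ * (2 * A * r + B) + A * δ) + B

lemma steps_le_excursionLength {x y : RayWithArcs} {n : ℕ} {c c' m r δ A B : ℝ}
    (hxc : x.1 = arc n c) (hyc : y.1 = arc n c') (hx : depth x ≤ r) (hy : depth y ≤ r)
    (hcoord : |c - c'| ≤ m * δ) (hm : m ≤ A * dist x y + B)
    (hr : 0 ≤ r) (hδ : 0 ≤ δ) (hA : 0 ≤ A) (hB : 0 ≤ B) :
    m ≤ excursionLength r δ A B := by
  have hspan : dist x y ≤ 2 * r + span n := by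
    linarith [dist_le_depth_add_span_add_depth hxc hyc]
  have hxv : (arc n c).Valid := hxc ▸ x.2
  have hyv : (arc n c').Valid := hyc ▸ y.2
  rw [depth, hxc] at hx
  rw [depth, hyc] at hy
  have hdist : dist x y ≤ |c - c'| := by
    rw [dist_def, hxc, hyc]; exact Pt.dist_arc_arc_le _ _ _
  have hE : 0 ≤ δ * (2 * A * r + B) := by positivity
  rcases abs_sub_le_or_le_abs_sub ⟨hxv.1.le, hxv.2.le⟩ ⟨hyv.1.le, hyv.2.le⟩ hx hy with h | h
  · unfold excursionLength
    nlinarith [mul_nonneg hA hδ]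
  · have hm' : m ≤ A * (2 * r + span n) + B := hm.trans (by gcongr)
    have hℓ : span n ≤ 2 * r + δ * (2 * A * r + B) + A * δ := by
      have hsq : span n ^ 2 ≤ (2 * r + δ * (2 * A * r + B)) + A * δ * span n := by
        have := mul_le_mul_of_nonneg_right hm' hδ
        rw [arcLength] at h
        nlinarith
      nlinarith [one_le_span n]
    unfold excursionLength
    nlinarith

theorem depth_le_of_isDiscreteQuasiGeodesic {x : ℕ → RayWithArcs} {k : ℕ} {δ A B : ℝ}
    (hx : IsDiscreteQuasiGeodesic x k δ A B) (hδ : 0 ≤ δ) (hA : 0 ≤ A) (hB : 0 ≤ B)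
    (h0 : depth (x 0) = 0) (hk : depth (x k) = 0) {j : ℕ} (hj : j ≤ k) :
    depth (x j) ≤ 2 * δ + δ * excursionLength (2 * δ) δ A B := by
  obtain ⟨hstep, hlow⟩ := hx
  have hE : 0 ≤ δ * excursionLength (2 * δ) δ A B := by unfold excursionLength; positivity
  by_cases hjδ : depth (x j) ≤ δ
  · linarith
  obtain ⟨u, w, hu0, huj, hjw, hwk, hu, hw, hdeep⟩ := Nat.exists_maximal_block
    (P := fun i ↦ depth (x i) ≤ δ) (by simp [h0, hδ]) (by simp [hk, hδ]) hjδ hj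
  simp only [not_le] at hdeep
  have hstep' : ∀ i, u ≤ i → i < w → dist (x i) (x (i + 1)) ≤ δ :=
    fun i _ hi ↦ hstep i (by omega)
  obtain ⟨hidx, hcoord⟩ := index_eq_and_abs_coord_sub_le (huj.trans hjw) hdeep hstep'
  have hdu : depth (x u) ≤ 2 * δ := by
    have := hstep (u - 1) (by omega)
    rw [Nat.sub_add_cancel hu0, dist_comm] at this
    linarith [depth_le_depth_add_dist (x u) (x (u - 1)), show depth (x (u - 1)) ≤ δ from hu]
  have hdw : depth (x w) ≤ 2 * δ := by
    linarith [depth_le_depth_add_dist (x w) (x (w + 1)), hstep w hwk,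
      show depth (x (w + 1)) ≤ δ from hw]
  have hxu := eq_arc_of_depth_pos (hδ.trans_lt (hdeep u le_rfl (huj.trans hjw)))
  have hxw := eq_arc_of_depth_pos (hδ.trans_lt (hdeep w (huj.trans hjw) le_rfl))
  rw [hidx] at hxw
  have hsteps := steps_le_excursionLength hxu hxw hdu hdw hcoord
    (hlow u w (huj.trans hjw) hwk.le) (by linarith) hδ hA hB
  have hju : dist (x u) (x j) ≤ ((j : ℝ) - u) * δ :=
    dist_le_mul_of_dist_succ_le huj fun i _ hi ↦ hstep i (by omega)
  have hjw' : (j : ℝ) ≤ w := by exact_mod_cast hjw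
  calc depth (x j) ≤ depth (x u) + dist (x u) (x j) := by
        rw [dist_comm]; exact depth_le_depth_add_dist _ _
    _ ≤ 2 * δ + ((w : ℝ) - u) * δ := by nlinarith
    _ ≤ 2 * δ + δ * excursionLength (2 * δ) δ A B := by nlinarith

def morseGauge (lam eps : ℝ) : ℝ :=
  3 * (1 + eps) +
    (1 + eps) * excursionLength (2 * (1 + eps)) (1 + eps) (lam ^ 2) (lam ^ 2 * eps + 1)

theorem isMorseWith_morseGauge : IsMorseWith morseGauge (rayPt '' Ici 0) := by
  intro lam eps hlam heps a b hab σ hσ ha hb t ht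
  have hlam0 : 0 < lam := by linarith
  have hend : ∀ s, σ s ∈ rayPt '' Ici 0 → depth (σ s) = 0 := by
    rintro s ⟨u, -, hu⟩; rw [← hu, depth_rayPt]
  obtain ⟨j, hjk, hjt⟩ := exists_mul_abs_sub_mesh_le hlam0 ht
  have hdepth := depth_le_of_isDiscreteQuasiGeodesic
    (hσ.isDiscreteQuasiGeodesic_mesh hlam0 hab) (by linarith)
    (sq_nonneg lam) (by positivity) (by simpa [mesh_zero hab] using hend a ha)
    (by simpa [mesh_ceil hlam0] using hend b hb) hjk
  rw [infDist_eq_depth]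
  calc depth (σ t) ≤ depth (σ (mesh lam a b j)) + dist (σ t) (σ (mesh lam a b j)) :=
        depth_le_depth_add_dist _ _
    _ ≤ 2 * (1 + eps) + (1 + eps) * excursionLength (2 * (1 + eps)) (1 + eps) (lam ^ 2)
          (lam ^ 2 * eps + 1) + (1 + eps) :=
      add_le_add hdepth (by linarith [(hσ _ ht _ (mesh_mem_Icc hlam0 hab j)).2])
    _ = morseGauge lam eps := by unfold morseGauge; ring

end

end RayWithArcs

/-- There exists a proper geodesic metric space containing a geodesic ray which is Morse but
not `D`-contracting for any constant `D`. -/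
theorem exists_morse_not_contracting :
    ∃ (X : Type) (m : MetricSpace X), @MorseNotContractingSpace X m :=
  ⟨RayWithArcs, inferInstance, inferInstance, RayWithArcs.geodesicSpace, RayWithArcs.rayPt,
    RayWithArcs.isGeodesicRay_rayPt, ⟨_, RayWithArcs.isMorseWith_morseGauge⟩,
    fun D _ ↦ RayWithArcs.exists_ball_diam_projSet_gt D⟩
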